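/- Let M₁ and M₂ be matroids on ground sets E₁ and E₂ with E₁ ∩ E₂ = {c}. If the toric ideals J_{M₁} and J_{M₂} are both generated by quadratic binomials, then the toric ideal of the series connection S(M₁,M₂) with respect to the basepoint c is generated by quadratic binomials. -/

import Mathlib

open MvPolynomial


section Toric

/-- The toric (bases monomial) map of a matroid: the variables are indexed by the bases of `M`,
and the variable of a basis `B` is sent to `∏_{l ∈ B} s_l`. -/
noncomputable def matroidToricMap (K : Type) [Field K] {α : Type} [Fintype α] [DecidableEq α]
    (M : Matroid α) :
    MvPolynomial {B : Finset α // M.IsBase ↑B} K →ₐ[K] MvPolynomial α K :=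
  aeval fun b => ∏ l ∈ b.1, X l

/-- The toric ideal `J_M` of a matroid `M`. -/
noncomputable def matroidToricIdeal (K : Type) [Field K] {α : Type} [Fintype α] [DecidableEq α]
    (M : Matroid α) : Ideal (MvPolynomial {B : Finset α // M.IsBase ↑B} K) :=
  RingHom.ker (matroidToricMap K M).toRingHom

/-- `G` consists of quadratic binomials `x_i x_j - x_k x_l`. -/
def IsQuadBinomialSet {σ K : Type} [Field K] (G : Set (MvPolynomial σ K)) : Prop :=
  ∀ f ∈ G, ∃ i j k l : σ, f = X i * X j - X k * X l

/-- The ideal `I` is generated by quadratic binomials. -/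
def GeneratedByQuadBinomials {σ K : Type} [Field K] (I : Ideal (MvPolynomial σ K)) : Prop :=
  ∃ G : Set (MvPolynomial σ K), IsQuadBinomialSet G ∧ Ideal.span G = I

end Toric

section MatroidOps

/-- `c` is a loop of `M`: an element of the ground set belonging to no basis of `M`. -/
def IsLoopElem {α : Type} (M : Matroid α) (c : α) : Prop :=
  c ∈ M.E ∧ ∀ B, M.IsBase B → c ∉ B

/-- `c` is a coloop of `M`: an element contained in every basis of `M`. -/
def IsColoopElem {α : Type} (M : Matroid α) (c : α) : Prop :=
  ∀ B, M.IsBase B → c ∈ B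

/-- `M'` is the deletion `M ∖ c`: its ground set is `M.E \ {c}` and its bases are
`{B \ {c} : B basis of M}` if `c` is a coloop of `M`, and `{B basis of M : c ∉ B}`
otherwise. -/
def IsDeletionOf {α : Type} (M' M : Matroid α) (c : α) : Prop :=
  M'.E = M.E \ {c} ∧ ∀ S : Set α, M'.IsBase S ↔
    ((IsColoopElem M c ∧ ∃ B, M.IsBase B ∧ S = B \ {c}) ∨
     (¬ IsColoopElem M c ∧ M.IsBase S ∧ c ∉ S))

/-- `M'` is the contraction `M / c`, defined dually: `M / c = (M✶ ∖ c)✶`. -/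
def IsContractionOf {α : Type} (M' M : Matroid α) (c : α) : Prop :=
  IsDeletionOf (M'✶) (M✶) c

end MatroidOps


/-!
The toric ideal of a family of multisets `β i` is generated by quadratic binomials iff every
fibre of `x ↦ x.bind β` is connected by quadratic moves `{i, j} ↦ {k, l}` with
`β i + β j = β k + β l`: binomials of one fibre telescope along a chain of moves, and
conversely the coefficient sum over a move class vanishes on the ideal generated by the
quadratic binomials of the kernel.

For a series connection every basis is a disjoint union `B ∪ D` of a basis of `M₁` and one
of `M₂`. Two multisets of such bases with the same union have the same unions of their
`M₁`-parts and of their `M₂`-parts, since an element other than `c` occurs on one side only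
and `c` is accounted for by the cardinalities. Moves of the `M₁`-parts, then of the
`M₂`-parts, lift to moves of the pairs, reattaching partners so that `c` never lies in both
halves of a pair; the resulting pairs are then matched with the target ones by exchanging
partners, routed through a pair avoiding `c` when a direct exchange would put `c` twice
into one pair. When `c` is a loop or coloop the series connection is a direct sum with a
minor, and deleting or contracting `c` preserves the connectivity by moves.
-/

open Relation

theorem AddMonoidAlgebra.mem_span_sub_single_of_mapDomain_eq_zero {R M N : Type*} [CommRing R]
    (f : M → N) {p : AddMonoidAlgebra R M} (hp : p.mapDomain f = 0) :
    p ∈ Submodule.span R {q | ∃ u v, f u = f v ∧ q = single u 1 - single v 1} := by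
  classical
  rcases isEmpty_or_nonempty M with hM | hM
  · obtain rfl : p = 0 := coeff_injective (Subsingleton.elim _ _)
    exact Submodule.zero_mem _
  set s : N → M := Function.invFun f
  have hs : ∀ u, f (s (f u)) = f u := fun u => Function.invFun_eq ⟨u, rfl⟩
  have key : ∀ q : AddMonoidAlgebra R M, q - q.mapDomain (s ∘ f) ∈
      Submodule.span R {q | ∃ u v, f u = f v ∧ q = single u 1 - single v 1} := by
    intro q
    induction q using AddMonoidAlgebra.induction_linear with
    | zero => simp
    | add p q hp hq =>
      rw [mapDomain_add, add_sub_add_comm]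
      exact Submodule.add_mem _ hp hq
    | single u r =>
      rw [mapDomain_single, Function.comp_apply]
      have : single u r - single (s (f u)) r =
          r • (single u 1 - single (s (f u)) 1 : AddMonoidAlgebra R M) := by
        simp [smul_sub, smul_single]
      rw [this]
      exact Submodule.smul_mem _ _ (Submodule.subset_span ⟨u, _, (hs u).symm, rfl⟩)
  have hcomp : p.mapDomain (s ∘ f) = (p.mapDomain f).mapDomain s := by
    ext; simp [Finsupp.mapDomain_comp]
  simpa [hcomp, hp] using key p

theorem Multiset.exists_eq_cons_cons_of_map_eq {σ τ : Type*} [DecidableEq σ] {f : σ → τ}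
    {s : Multiset σ} {a b : τ} {t : Multiset τ} (h : s.map f = a ::ₘ b ::ₘ t) :
    ∃ i j u, s = i ::ₘ j ::ₘ u ∧ f i = a ∧ f j = b ∧ u.map f = t := by
  obtain ⟨i, hi, rfl, h₁⟩ := (Multiset.map_eq_cons f s _ a).2 h
  obtain ⟨j, hj, rfl, h₂⟩ := (Multiset.map_eq_cons f (s.erase i) t _).2 h₁
  exact ⟨i, j, _, by rw [Multiset.cons_erase hj, Multiset.cons_erase hi], rfl, rfl, h₂⟩

theorem Multiset.card_bind_of_forall_card_eq {σ α : Type*} {β : σ → Multiset α} {r : ℕ}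
    (h : ∀ i, card (β i) = r) (s : Multiset σ) : card (s.bind β) = card s * r := by
  simp [Multiset.card_bind, h]

theorem Multiset.eq_of_card_eq_of_count_eq {α : Type*} [DecidableEq α] {s t : Multiset α}
    (c : α) (hcard : card s = card t) (h : ∀ a ≠ c, count a s = count a t) : s = t := by
  have hne : s.filter (· ≠ c) = t.filter (· ≠ c) := by
    ext a
    by_cases ha : a = c <;> simp [ha, h]
  have hsplit : ∀ u : Multiset α, card u = count c u + card (u.filter (· ≠ c)) := fun u => by
    conv_lhs => rw [← Multiset.filter_add_not (· = c) u]
    rw [card_add, Multiset.filter_eq', card_replicate]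
  have hc : count c s = count c t := by
    have := hsplit s
    rw [hcard, hsplit t, hne] at this
    omega
  ext a
  by_cases ha : a = c
  · exact ha ▸ hc
  · exact h a ha

theorem Finset.val_erase_add_val_erase_eq {α : Type*} [DecidableEq α] {c : α}
    {A B C D : Finset α} (hA : c ∈ A) (hB : c ∈ B) (hC : c ∈ C) (hD : c ∈ D)
    (h : A.val + B.val = C.val + D.val) :
    (A.erase c).val + (B.erase c).val = (C.erase c).val + (D.erase c).val := by
  have hcons : ∀ {A B : Finset α}, c ∈ A → c ∈ B →
      A.val + B.val = c ::ₘ c ::ₘ ((A.erase c).val + (B.erase c).val) := fun hA hB => by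
    rw [Finset.erase_val, Finset.erase_val, ← Multiset.add_cons, ← Multiset.cons_add,
      Multiset.cons_erase hA, Multiset.cons_erase hB]
  rw [hcons hA hB, hcons hC hD] at h
  exact (Multiset.cons_inj_right _).1 ((Multiset.cons_inj_right _).1 h)

theorem rematch_of_indicator_add_eq {b₁ b₂ b₃ b₄ d₁ d₂ : Prop} [Decidable b₁] [Decidable b₂]
    [Decidable b₃] [Decidable b₄]
    (hcount : (if b₁ then 1 else 0) + (if b₂ then 1 else 0) =
      (if b₃ then 1 else 0) + ((if b₄ then 1 else 0) : ℕ))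
    (h₁ : ¬(b₁ ∧ d₁)) (h₂ : ¬(b₂ ∧ d₂)) :
    (¬(b₃ ∧ d₁) ∧ ¬(b₄ ∧ d₂)) ∨ (¬(b₃ ∧ d₂) ∧ ¬(b₄ ∧ d₁)) := by
  by_cases b₁ <;> by_cases b₂ <;> by_cases b₃ <;> by_cases b₄ <;> simp_all

theorem Relation.ReflTransGen.apply_eq {β γ : Type*} {r : β → β → Prop} (f : β → γ)
    (h : ∀ a b, r a b → f a = f b) {a b : β} (hab : ReflTransGen r a b) : f a = f b := by
  induction hab with
  | refl => rfl
  | tail _ hbc ih => exact ih.trans (h _ _ hbc)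

theorem Relation.ReflTransGen.exists_lift {β γ δ : Type*} {r : β → β → Prop}
    {s : γ → γ → Prop} (f : γ → β) (g : γ → δ)
    (h : ∀ P x, r (f P) x → ∃ Q, s P Q ∧ f Q = x ∧ g Q = g P)
    {P : γ} {x : β} (hx : ReflTransGen r (f P) x) :
    ∃ Q, ReflTransGen s P Q ∧ f Q = x ∧ g Q = g P := by
  induction hx with
  | refl => exact ⟨P, .refl, rfl, rfl⟩
  | tail _ hyz ih =>
    obtain ⟨Q, hPQ, rfl, hQ⟩ := ih
    obtain ⟨R, hQR, rfl, hR⟩ := h Q _ hyz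
    exact ⟨R, hPQ.tail hQR, rfl, hR.trans hQ⟩

section MonomialMap

open Finsupp (toMultiset)

variable {K : Type*} [CommRing K] {σ α : Type*} {β : σ → Multiset α}

theorem MvPolynomial.prod_map_X_eq_monomial [DecidableEq σ] (m : Multiset σ) :
    (m.map (X : σ → MvPolynomial σ K)).prod = monomial (Multiset.toFinsupp m) 1 := by
  induction m using Multiset.induction with
  | empty => simp
  | cons i m ih =>
    rw [Multiset.map_cons, Multiset.prod_cons, ih, ← Multiset.singleton_add,
      Multiset.toFinsupp_add, Multiset.toFinsupp_singleton, ← pow_one (X i),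
      ← monomial_single_add]

variable (K β) in
noncomputable def monomialMap : MvPolynomial σ K →ₐ[K] MvPolynomial α K :=
  aeval fun i => ((β i).map X).prod

theorem monomialMap_prod_map_X (m : Multiset σ) :
    monomialMap K β (m.map X).prod = ((m.bind β).map X).prod := by
  simp [monomialMap, map_multiset_prod, Multiset.map_map, Multiset.map_bind, Multiset.prod_bind]

theorem monomialMap_monomial [DecidableEq α] (d : σ →₀ ℕ) (c : K) :
    monomialMap K β (monomial d c) =
      monomial (Multiset.toFinsupp ((toMultiset d).bind β)) c := by
  classical
  rw [← mul_one c, ← smul_eq_mul, ← smul_monomial, map_smul, ← smul_monomial,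
    ← Finsupp.toMultiset_toFinsupp d, ← prod_map_X_eq_monomial, monomialMap_prod_map_X,
    prod_map_X_eq_monomial, Finsupp.toMultiset_toFinsupp]

theorem monomialMap_eq_mapDomain [DecidableEq α] (p : MvPolynomial σ K) :
    monomialMap K β p = p.mapDomain fun d => Multiset.toFinsupp ((toMultiset d).bind β) := by
  induction p using MvPolynomial.induction_on' with
  | monomial d c =>
    rw [monomialMap_monomial, ← single_eq_monomial, ← single_eq_monomial,
      AddMonoidAlgebra.mapDomain_single]
  | add p q hp hq => rw [map_add, hp, hq, AddMonoidAlgebra.mapDomain_add]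

theorem mem_span_binomial_of_monomialMap_eq_zero {p : MvPolynomial σ K}
    (hp : monomialMap K β p = 0) :
    p ∈ Submodule.span K {q | ∃ u v : σ →₀ ℕ,
      (toMultiset u).bind β = (toMultiset v).bind β ∧ q = monomial u 1 - monomial v 1} := by
  classical
  refine AddMonoidAlgebra.mem_span_sub_single_of_mapDomain_eq_zero
    (fun d => (toMultiset d).bind β) ?_
  apply AddMonoidAlgebra.mapDomain_injective Multiset.toFinsupp.injective
  rw [AddMonoidAlgebra.mapDomain_zero, ← hp, monomialMap_eq_mapDomain]
  apply AddMonoidAlgebra.coeff_injective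
  simp only [AddMonoidAlgebra.coeff_mapDomain]
  exact Finsupp.mapDomain_comp.symm

theorem monomialMap_prod_sub_prod_eq_zero_iff [Nontrivial K] (x y : Multiset σ) :
    monomialMap K β ((x.map (X (R := K))).prod - (y.map X).prod) = 0 ↔
      x.bind β = y.bind β := by
  classical
  rw [map_sub, sub_eq_zero, monomialMap_prod_map_X, monomialMap_prod_map_X,
    prod_map_X_eq_monomial, prod_map_X_eq_monomial,
    (monomial_left_injective one_ne_zero).eq_iff, Multiset.toFinsupp.injective.eq_iff]

end MonomialMap

section QuadMove

variable {σ τ α : Type*} {β : σ → Multiset α} {x y : Multiset σ}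

def QuadMove (β : σ → Multiset α) (x y : Multiset σ) : Prop :=
  ∃ i j k l w, x = i ::ₘ j ::ₘ w ∧ y = k ::ₘ l ::ₘ w ∧ β i + β j = β k + β l

def QuadConnected (β : σ → Multiset α) : Prop :=
  ∀ x y : Multiset σ, x.bind β = y.bind β → ReflTransGen (QuadMove β) x y

theorem QuadMove.symm (h : QuadMove β x y) : QuadMove β y x := by
  obtain ⟨i, j, k, l, w, rfl, rfl, h⟩ := h
  exact ⟨k, l, i, j, w, rfl, rfl, h.symm⟩

instance : Std.Symm (QuadMove β) := ⟨fun _ _ => QuadMove.symm⟩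

theorem QuadMove.bind_eq (h : QuadMove β x y) : x.bind β = y.bind β := by
  obtain ⟨i, j, k, l, w, rfl, rfl, h⟩ := h
  simp only [Multiset.cons_bind, ← add_assoc, h]

theorem QuadMove.card_eq (h : QuadMove β x y) : x.card = y.card := by
  obtain ⟨i, j, k, l, w, rfl, rfl, -⟩ := h
  simp

theorem QuadMove.map {γ : τ → Multiset α} (f : σ → τ) (hf : ∀ i, γ (f i) = β i)
    (h : QuadMove β x y) : QuadMove γ (x.map f) (y.map f) := by
  obtain ⟨i, j, k, l, w, rfl, rfl, h⟩ := h
  exact ⟨f i, f j, f k, f l, w.map f, by simp, by simp, by simpa only [hf]⟩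

theorem QuadMove.cons (a : σ) (h : QuadMove β x y) : QuadMove β (a ::ₘ x) (a ::ₘ y) := by
  obtain ⟨i, j, k, l, w, rfl, rfl, h⟩ := h
  exact ⟨i, j, k, l, a ::ₘ w, by simp only [Multiset.cons_swap a],
    by simp only [Multiset.cons_swap a], h⟩

theorem QuadConnected.ne_zero (h : QuadConnected β) (i : σ) : β i ≠ 0 := by
  intro hi
  have := (h {i} 0 (by simp [hi])).apply_eq Multiset.card fun _ _ => QuadMove.card_eq
  simp at this

theorem card_eq_of_bind_eq {r : ℕ} (hr : 0 < r) (h : ∀ i, Multiset.card (β i) = r)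
    (hxy : x.bind β = y.bind β) : Multiset.card x = Multiset.card y := by
  have := congrArg Multiset.card hxy
  rw [Multiset.card_bind_of_forall_card_eq h, Multiset.card_bind_of_forall_card_eq h] at this
  exact Nat.eq_of_mul_eq_mul_right hr this

end QuadMove

section QuadraticGeneration

variable {K : Type*} [CommRing K] {σ α : Type*} {β : σ → Multiset α}

variable (K β) in
def quadBinomialsKer : Set (MvPolynomial σ K) :=
  {g | (∃ i j k l, g = X i * X j - X k * X l) ∧ monomialMap K β g = 0}

theorem prod_sub_prod_mem_span_quadBinomialsKer [Nontrivial K] {x y : Multiset σ}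
    (h : ReflTransGen (QuadMove β) x y) :
    (x.map (X (R := K))).prod - (y.map X).prod ∈ Ideal.span (quadBinomialsKer K β) := by
  induction h with
  | refl => rw [sub_self]; exact Ideal.zero_mem _
  | @tail y z _ hyz ih =>
    obtain ⟨i, j, k, l, w, rfl, rfl, hijkl⟩ := hyz
    have hgen : X i * X j - X k * X l ∈ quadBinomialsKer K β := by
      refine ⟨⟨i, j, k, l, rfl⟩, ?_⟩
      simpa using (monomialMap_prod_sub_prod_eq_zero_iff (K := K) (β := β) {i, j} {k, l}).2
        (by simpa using hijkl)
    have hmul : ((i ::ₘ j ::ₘ w).map (X (R := K))).prod - ((k ::ₘ l ::ₘ w).map X).prod =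
        (w.map X).prod * (X i * X j - X k * X l) := by
      simp only [Multiset.map_cons, Multiset.prod_cons]; ring
    rw [← sub_add_sub_cancel _ (((i ::ₘ j ::ₘ w).map X).prod), hmul]
    exact Ideal.add_mem _ ih (Ideal.mul_mem_left _ _ (Ideal.subset_span hgen))

variable (K β) in
noncomputable def moveClassCoeffs : MvPolynomial σ K →ₗ[K] Quot (QuadMove β) →₀ K :=
  (Finsupp.lmapDomain K K fun d => Quot.mk _ (Finsupp.toMultiset d)).comp
    (AddMonoidAlgebra.coeffLinearEquiv K).toLinearMap

theorem moveClassCoeffs_C_mul_prod (c : K) (m : Multiset σ) :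
    moveClassCoeffs K β (C c * (m.map X).prod) = Finsupp.single (Quot.mk _ m) c := by
  classical
  rw [prod_map_X_eq_monomial, C_mul_monomial, mul_one, ← single_eq_monomial]
  simp [moveClassCoeffs]

theorem moveClassCoeffs_mul_eq_zero [Nontrivial K] {p : MvPolynomial σ K}
    (hp : p ∈ Ideal.span (quadBinomialsKer K β)) (a : MvPolynomial σ K) :
    moveClassCoeffs K β (a * p) = 0 := by
  classical
  induction hp using Submodule.span_induction generalizing a with
  | mem g hg =>
    obtain ⟨⟨i, j, k, l, rfl⟩, hg⟩ := hg
    have hijkl : β i + β j = β k + β l := by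
      simpa using (monomialMap_prod_sub_prod_eq_zero_iff (K := K) {i, j} {k, l}).1
        (by simpa using hg)
    induction a using MvPolynomial.induction_on' with
    | monomial d c =>
      set m := Finsupp.toMultiset d
      have hmono : monomial d c = C c * (m.map X).prod := by
        rw [prod_map_X_eq_monomial, Finsupp.toMultiset_toFinsupp, C_mul_monomial, mul_one]
      have hmul : monomial d c * (X i * X j - X k * X l) =
          C c * ((i ::ₘ j ::ₘ m).map X).prod - C c * ((k ::ₘ l ::ₘ m).map X).prod := by
        rw [hmono]
        simp only [Multiset.map_cons, Multiset.prod_cons]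
        ring
      rw [hmul, map_sub, moveClassCoeffs_C_mul_prod, moveClassCoeffs_C_mul_prod,
        Quot.sound ⟨i, j, k, l, m, rfl, rfl, hijkl⟩, sub_self]
    | add p q hp hq => rw [add_mul, map_add, hp, hq, add_zero]
  | zero => simp
  | add p q _ _ hp hq => rw [mul_add, map_add, hp, hq, add_zero]
  | smul b p _ hp => rw [smul_eq_mul, ← mul_assoc]; exact hp _

theorem reflTransGen_quadMove_of_prod_sub_prod_mem_span [Nontrivial K] {x y : Multiset σ}
    (h : (x.map (X (R := K))).prod - (y.map X).prod ∈ Ideal.span (quadBinomialsKer K β)) :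
    ReflTransGen (QuadMove β) x y := by
  have hxy := moveClassCoeffs_mul_eq_zero h 1
  rw [one_mul, map_sub, sub_eq_zero, ← one_mul (x.map X).prod, ← one_mul (y.map X).prod,
    ← C_1, moveClassCoeffs_C_mul_prod, moveClassCoeffs_C_mul_prod,
    (Finsupp.single_left_injective one_ne_zero).eq_iff] at hxy
  rw [← EqvGen.eqvGen_eq_reflTransGen]
  exact Quot.eqvGen_exact hxy

theorem generatedByQuadBinomials_ker_monomialMap_iff {K σ : Type} [Field K] {α : Type*}
    {β : σ → Multiset α} :
    GeneratedByQuadBinomials (RingHom.ker (monomialMap K β).toRingHom) ↔ QuadConnected β := by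
  classical
  constructor
  · rintro ⟨G, hG, hspan⟩ x y hxy
    have hGker : G ⊆ quadBinomialsKer K β := fun g hg =>
      ⟨hG g hg, RingHom.mem_ker.1 (hspan ▸ Ideal.subset_span hg)⟩
    apply reflTransGen_quadMove_of_prod_sub_prod_mem_span (K := K)
    refine Ideal.span_mono hGker (hspan ▸ RingHom.mem_ker.2 ?_)
    exact (monomialMap_prod_sub_prod_eq_zero_iff x y).2 hxy
  · intro h
    refine ⟨quadBinomialsKer K β, fun g hg => hg.1,
      le_antisymm (Ideal.span_le.2 fun g hg => RingHom.mem_ker.2 hg.2) fun p hp => ?_⟩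
    refine (Submodule.span_le (p := (Ideal.span _).restrictScalars K)).2 ?_
      (mem_span_binomial_of_monomialMap_eq_zero (RingHom.mem_ker.1 hp))
    rintro _ ⟨u, v, huv, rfl⟩
    simpa [prod_map_X_eq_monomial] using
      prod_sub_prod_mem_span_quadBinomialsKer (K := K) (h _ _ huv)

end QuadraticGeneration

section FinsetFamily

variable {α : Type*} {P : Finset α → Prop} {c : α}

def QuadConnectedFamily (P : Finset α → Prop) : Prop :=
  QuadConnected fun B : {B // P B} => B.1.val

theorem QuadConnectedFamily.nonempty (hP : QuadConnectedFamily P) {B : Finset α} (hB : P B) :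
    B.Nonempty :=
  Finset.nonempty_iff_ne_empty.2 fun h => hP.ne_zero ⟨B, hB⟩ (by simp [h])

theorem exists_pos_card_eq (hcard : ∀ B B', P B → P B' → B.card = B'.card)
    (hne : ∀ B, P B → B.Nonempty) : ∃ r, 0 < r ∧ ∀ B, P B → B.card = r := by
  by_cases h : ∃ B, P B
  · obtain ⟨B₀, hB₀⟩ := h
    exact ⟨B₀.card, (hne B₀ hB₀).card_pos, fun B hB => hcard B B₀ hB hB₀⟩
  · exact ⟨1, one_pos, fun B hB => absurd ⟨B, hB⟩ h⟩

theorem QuadConnectedFamily.restrict_notMem [DecidableEq α] (hP : QuadConnectedFamily P) (c : α) :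
    QuadConnectedFamily fun B => P B ∧ c ∉ B := by
  let ι : {B // P B ∧ c ∉ B} → {B // P B} := fun B => ⟨B.1, B.2.1⟩
  -- moves preserve the union of the blocks, so they cannot create a block containing `c`
  have hstep : ∀ (x : Multiset {B // P B ∧ c ∉ B}) z,
      QuadMove (fun B : {B // P B} => B.1.val) (x.map ι) z →
      ∃ y, QuadMove (fun B : {B // P B ∧ c ∉ B} => B.1.val) x y ∧ y.map ι = z := by
    intro x z h
    have hz : ∀ B ∈ z, c ∉ B.1 := fun B hB hcB => by
      have : c ∈ (x.map ι).bind (·.1.val) := h.bind_eq ▸ Multiset.mem_bind.2 ⟨B, hB, hcB⟩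
      obtain ⟨B', hB', hcB'⟩ := Multiset.mem_bind.1 this
      obtain ⟨B'', -, rfl⟩ := Multiset.mem_map.1 hB'
      exact B''.2.2 hcB'
    obtain ⟨_, _, k, l, _, hx, rfl, hsum⟩ := h
    obtain ⟨i, j, W, rfl, rfl, rfl, rfl⟩ := Multiset.exists_eq_cons_cons_of_map_eq hx
    exact ⟨⟨k.1, k.2, hz k (by simp)⟩ ::ₘ ⟨l.1, l.2, hz l (by simp)⟩ ::ₘ W,
      ⟨i, j, _, _, W, rfl, rfl, hsum⟩, by simp only [Multiset.map_cons]; rfl⟩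
  intro x y hxy
  obtain ⟨y', hxy', hy', -⟩ := ReflTransGen.exists_lift (Multiset.map ι) (fun _ => ())
    (fun x z h => (hstep x z h).imp fun _ h => ⟨h.1, h.2, rfl⟩)
    (hP (x.map ι) (y.map ι) (by rwa [Multiset.bind_map, Multiset.bind_map]))
  rwa [Multiset.map_injective (fun B B' h => Subtype.ext (congrArg (·.1) h)) hy'] at hxy'

theorem QuadConnectedFamily.of_insert [DecidableEq α] (hP : QuadConnectedFamily P)
    (hcP : ∀ B, P B → c ∈ B) (hcard : ∀ B B', P B → P B' → B.card = B'.card)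
    (hne : ∀ D, c ∉ D → P (insert c D) → D.Nonempty) :
    QuadConnectedFamily fun D => c ∉ D ∧ P (insert c D) := by
  let ins : {D // c ∉ D ∧ P (insert c D)} → {B // P B} := fun D => ⟨insert c D.1, D.2.2⟩
  let era : {B // P B} → {D // c ∉ D ∧ P (insert c D)} := fun B =>
    ⟨B.1.erase c, Finset.notMem_erase c B.1, by rw [Finset.insert_erase (hcP B.1 B.2)]; exact B.2⟩
  have hera : ∀ x : Multiset {D // c ∉ D ∧ P (insert c D)}, (x.map ins).map era = x := by
    intro x
    rw [Multiset.map_map]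
    exact (Multiset.map_congr rfl fun D _ => Subtype.ext (Finset.erase_insert D.2.1)).trans
      (Multiset.map_id x)
  have hbind : ∀ x : Multiset {D // c ∉ D ∧ P (insert c D)},
      (x.map ins).bind (·.1.val) = Multiset.replicate (Multiset.card x) c + x.bind (·.1.val) := by
    intro x
    induction x using Multiset.induction with
    | empty => simp
    | cons D x ih =>
      simp only [Multiset.map_cons, Multiset.cons_bind, ih, Multiset.card_cons,
        Multiset.replicate_succ, ins, Finset.insert_val_of_notMem D.2.1]
      simp only [Multiset.cons_add, Multiset.add_cons, add_left_comm]
  obtain ⟨r, hr, hr'⟩ := exists_pos_card_eq (P := fun D => c ∉ D ∧ P (insert c D))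
    (fun D D' hD hD' => by
      have := hcard _ _ hD.2 hD'.2
      rwa [Finset.card_insert_of_notMem hD.1, Finset.card_insert_of_notMem hD'.1,
        Nat.add_right_cancel_iff] at this) fun D hD => hne D hD.1 hD.2
  intro x y hxy
  have hcard : Multiset.card x = Multiset.card y :=
    card_eq_of_bind_eq hr (fun D => Finset.card_val D.1 ▸ hr' D.1 D.2) hxy
  have hxy' := hP (x.map ins) (y.map ins) (by rw [hbind, hbind, hcard, hxy])
  rw [← hera x, ← hera y]
  refine ReflTransGen.lift (Multiset.map era) (fun _ _ h => ?_) _ _ hxy'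
  obtain ⟨i, j, k, l, w, rfl, rfl, hsum⟩ := h
  exact ⟨era i, era j, era k, era l, w.map era, by simp, by simp,
    Finset.val_erase_add_val_erase_eq (hcP _ i.2) (hcP _ j.2) (hcP _ k.2) (hcP _ l.2) hsum⟩

end FinsetFamily

section Series

variable {α : Type*} {P₁ P₂ : Finset α → Prop} {c : α}

abbrev SeriesPair (P₁ P₂ : Finset α → Prop) : Type _ :=
  {p : Finset α × Finset α // P₁ p.1 ∧ P₂ p.2 ∧ Disjoint p.1 p.2}

namespace SeriesPair

def fst (p : SeriesPair P₁ P₂) : {B // P₁ B} := ⟨p.1.1, p.2.1⟩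

def snd (p : SeriesPair P₁ P₂) : {D // P₂ D} := ⟨p.1.2, p.2.2.1⟩

def val (p : SeriesPair P₁ P₂) : Multiset α := p.1.1.val + p.1.2.val

def swap (p : SeriesPair P₁ P₂) : SeriesPair P₂ P₁ := ⟨p.1.swap, p.2.2.1, p.2.1, p.2.2.2.symm⟩

def mix (p q : SeriesPair P₁ P₂) (h : Disjoint p.1.1 q.1.2) : SeriesPair P₁ P₂ :=
  ⟨(p.1.1, q.1.2), p.2.1, q.2.2.1, h⟩

def SwapMove (P Q : Multiset (SeriesPair P₁ P₂)) : Prop :=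
  ∃ p q W h h', P = p ::ₘ q ::ₘ W ∧ Q = mix p q h ::ₘ mix q p h' ::ₘ W

theorem disjoint_of_not_and_mem (hc : ∀ ⦃B D⦄, P₁ B → P₂ D → ∀ a ∈ B, a ∈ D → a = c)
    {B D : Finset α} (hB : P₁ B) (hD : P₂ D) (h : ¬(c ∈ B ∧ c ∈ D)) : Disjoint B D :=
  Finset.disjoint_left.2 fun a haB haD => h (hc hB hD a haB haD ▸ ⟨haB, haD⟩)

theorem SwapMove.map_fst {P Q : Multiset (SeriesPair P₁ P₂)} (h : SwapMove P Q) :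
    P.map fst = Q.map fst := by
  obtain ⟨p, q, W, _, _, rfl, rfl⟩ := h
  simp only [Multiset.map_cons]; rfl

theorem SwapMove.map_snd {P Q : Multiset (SeriesPair P₁ P₂)} (h : SwapMove P Q) :
    P.map snd = Q.map snd := by
  obtain ⟨p, q, W, _, _, rfl, rfl⟩ := h
  simp only [Multiset.map_cons]
  exact Multiset.cons_swap _ _ _

theorem SwapMove.quadMove {P Q : Multiset (SeriesPair P₁ P₂)} (h : SwapMove P Q) :
    QuadMove val P Q := by
  obtain ⟨p, q, W, _, _, rfl, rfl⟩ := h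
  exact ⟨p, q, _, _, W, rfl, rfl, by simp only [val, mix]; abel⟩

theorem exists_reflTransGen_swapMove_mix_cons
    (hc : ∀ ⦃B D⦄, P₁ B → P₂ D → ∀ a ∈ B, a ∈ D → a = c) {p₁ p₂ p₃ : SeriesPair P₁ P₂}
    (W : Multiset (SeriesPair P₁ P₂)) (h : Disjoint p₁.1.1 p₂.1.2)
    (hc₃ : c ∉ p₃.1.1 ∧ c ∉ p₃.1.2) :
    ∃ W', ReflTransGen SwapMove (p₁ ::ₘ p₂ ::ₘ p₃ ::ₘ W) (mix p₁ p₂ h ::ₘ W') := by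
  have h₁₃ := disjoint_of_not_and_mem hc p₁.2.1 p₃.2.2.1 fun h => hc₃.2 h.2
  have h₃₁ := disjoint_of_not_and_mem hc p₃.2.1 p₁.2.2.1 fun h => hc₃.1 h.1
  have h₂₃ := disjoint_of_not_and_mem hc p₂.2.1 p₃.2.2.1 fun h => hc₃.2 h.2
  refine ⟨mix p₂ (mix p₁ p₃ h₁₃) h₂₃ ::ₘ mix p₃ p₁ h₃₁ ::ₘ W, (ReflTransGen.single
    (b := mix p₁ p₃ h₁₃ ::ₘ mix p₃ p₁ h₃₁ ::ₘ p₂ ::ₘ W) ?_).tail ?_⟩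
  · exact ⟨p₁, p₃, p₂ ::ₘ W, h₁₃, h₃₁, by rw [Multiset.cons_swap p₂], rfl⟩
  · refine ⟨mix p₁ p₃ h₁₃, p₂, mix p₃ p₁ h₃₁ ::ₘ W, h, h₂₃, ?_, rfl⟩
    rw [Multiset.cons_swap (mix p₃ p₁ h₃₁)]

end SeriesPair

variable [DecidableEq α]

def SeriesFamily (P₁ P₂ : Finset α → Prop) (T : Finset α) : Prop :=
  ∃ B D, P₁ B ∧ P₂ D ∧ Disjoint B D ∧ T = B ∪ D

namespace SeriesPair

def union (p : SeriesPair P₁ P₂) : {T // SeriesFamily P₁ P₂ T} :=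
  ⟨p.1.1 ∪ p.1.2, p.1.1, p.1.2, p.2.1, p.2.2.1, p.2.2.2, rfl⟩

theorem val_union (p : SeriesPair P₁ P₂) : (union p).1.val = p.val := by
  change (p.1.1 ∪ p.1.2).val = _
  rw [← Finset.disjUnion_eq_union _ _ p.2.2.2]; rfl

theorem union_surjective : Function.Surjective (union : SeriesPair P₁ P₂ → _) := by
  rintro ⟨T, B, D, hB, hD, hBD, rfl⟩
  exact ⟨⟨(B, D), hB, hD, hBD⟩, rfl⟩

theorem bind_map_union (P : Multiset (SeriesPair P₁ P₂)) :
    (P.map union).bind (·.1.val) = (P.map fst).bind (·.1.val) + (P.map snd).bind (·.1.val) := by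
  induction P using Multiset.induction with
  | empty => simp
  | cons p P ih =>
    simp only [Multiset.map_cons, Multiset.cons_bind, ih, val_union]
    simp only [val, fst, snd]; abel

theorem bind_map_fst_eq (hc : ∀ ⦃B D⦄, P₁ B → P₂ D → ∀ a ∈ B, a ∈ D → a = c) {r : ℕ}
    (hr : ∀ B, P₁ B → B.card = r) {P Q : Multiset (SeriesPair P₁ P₂)}
    (hcard : Multiset.card P = Multiset.card Q)
    (h : (P.map union).bind (·.1.val) = (Q.map union).bind (·.1.val)) :
    (P.map fst).bind (·.1.val) = (Q.map fst).bind (·.1.val) := by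
  have hr' : ∀ B : {B // P₁ B}, Multiset.card B.1.val = r := fun B => hr B.1 B.2
  refine Multiset.eq_of_card_eq_of_count_eq c ?_ fun a ha => ?_
  · simp only [Multiset.card_bind_of_forall_card_eq hr', Multiset.card_map, hcard]
  rw [bind_map_union, bind_map_union] at h
  have hcount := congrArg (Multiset.count a) h
  simp only [Multiset.count_add] at hcount
  by_cases ha₁ : ∀ B, P₁ B → a ∉ B
  · have h₁ : ∀ R : Multiset (SeriesPair P₁ P₂),
        Multiset.count a ((R.map fst).bind (·.1.val)) = 0 :=
      fun R => Multiset.count_eq_zero.2 fun hmem => by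
        obtain ⟨B, -, haB⟩ := Multiset.mem_bind.1 hmem
        exact ha₁ B.1 B.2 haB
    rw [h₁, h₁]
  · -- `a ≠ c` lies in a block of `P₁`, hence in no block of `P₂`
    obtain ⟨B, hB, haB⟩ := not_forall₂.1 ha₁
    have h₂ : ∀ R : Multiset (SeriesPair P₁ P₂),
        Multiset.count a ((R.map snd).bind (·.1.val)) = 0 :=
      fun R => Multiset.count_eq_zero.2 fun hmem => by
        obtain ⟨D, -, haD⟩ := Multiset.mem_bind.1 hmem
        exact ha (hc hB D.2 a (not_not.1 haB) haD)
    simpa only [h₂, add_zero] using hcount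

theorem exists_quadMove_of_quadMove_map_fst
    (hc : ∀ ⦃B D⦄, P₁ B → P₂ D → ∀ a ∈ B, a ∈ D → a = c) {P : Multiset (SeriesPair P₁ P₂)}
    {x : Multiset {B // P₁ B}} (h : QuadMove (fun B => B.1.val) (P.map fst) x) :
    ∃ Q, QuadMove val P Q ∧ Q.map fst = x ∧ Q.map snd = P.map snd := by
  obtain ⟨_, _, b₃, b₄, _, hP, rfl, hsum⟩ := h
  obtain ⟨q₁, q₂, W, rfl, rfl, rfl, rfl⟩ := Multiset.exists_eq_cons_cons_of_map_eq hP
  have attach : ∀ p q, p ::ₘ q ::ₘ W = q₁ ::ₘ q₂ ::ₘ W →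
      p.1.1.val + q.1.1.val = b₃.1.val + b₄.1.val → ¬(c ∈ b₃.1 ∧ c ∈ p.1.2) →
      ¬(c ∈ b₄.1 ∧ c ∈ q.1.2) → ∃ Q, QuadMove val (q₁ ::ₘ q₂ ::ₘ W) Q ∧
        Q.map fst = b₃ ::ₘ b₄ ::ₘ W.map fst ∧ Q.map snd = (q₁ ::ₘ q₂ ::ₘ W).map snd := by
    intro p q hpq hsum h₃ h₄
    let p' : SeriesPair P₁ P₂ :=
      ⟨(b₃.1, p.1.2), b₃.2, p.2.2.1, disjoint_of_not_and_mem hc b₃.2 p.2.2.1 h₃⟩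
    let q' : SeriesPair P₁ P₂ :=
      ⟨(b₄.1, q.1.2), b₄.2, q.2.2.1, disjoint_of_not_and_mem hc b₄.2 q.2.2.1 h₄⟩
    refine ⟨p' ::ₘ q' ::ₘ W, ⟨p, q, p', q', W, hpq.symm, rfl, ?_⟩,
      by simp only [Multiset.map_cons]; rfl, by rw [← hpq]; simp only [Multiset.map_cons]; rfl⟩
    simp only [val, p', q']
    rw [add_add_add_comm, hsum, add_add_add_comm]
  -- counting `c` on both sides of `hsum` shows that one of the two ways of reattaching the
  -- second parts keeps both new pairs disjoint
  have hcount := congrArg (Multiset.count c) hsum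
  simp only [Multiset.count_add, Multiset.count_eq_of_nodup (Finset.nodup _),
    Finset.mem_val] at hcount
  rcases rematch_of_indicator_add_eq hcount
    (not_and.2 fun h h' => Finset.disjoint_left.1 q₁.2.2.2 h h')
    (not_and.2 fun h h' => Finset.disjoint_left.1 q₂.2.2.2 h h') with ⟨h₃, h₄⟩ | ⟨h₃, h₄⟩
  · exact attach q₁ q₂ rfl hsum h₃ h₄
  · exact attach q₂ q₁ (Multiset.cons_swap _ _ _) (by rw [add_comm]; exact hsum) h₃ h₄

theorem exists_quadMove_of_quadMove_map_snd
    (hc : ∀ ⦃B D⦄, P₁ B → P₂ D → ∀ a ∈ B, a ∈ D → a = c) {P : Multiset (SeriesPair P₁ P₂)}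
    {x : Multiset {D // P₂ D}} (h : QuadMove (fun D => D.1.val) (P.map snd) x) :
    ∃ Q, QuadMove val P Q ∧ Q.map snd = x ∧ Q.map fst = P.map fst := by
  have hswap : (P.map swap).map fst = P.map snd := by rw [Multiset.map_map]; rfl
  obtain ⟨Q, hPQ, hfst, hsnd⟩ := exists_quadMove_of_quadMove_map_fst
    (fun _ _ hD hB a haD haB => hc hB hD a haB haD) (hswap ▸ h)
  have hinv : (P.map swap).map swap = P := by rw [Multiset.map_map]; exact Multiset.map_id' P
  refine ⟨Q.map swap, hinv ▸ hPQ.map swap fun _ => add_comm _ _, ?_, ?_⟩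
  · rw [Multiset.map_map]; exact hfst
  · rw [Multiset.map_map]; exact hsnd.trans (by rw [Multiset.map_map]; rfl)

theorem card_eq_countP_add_countP_add_countP (P : Multiset (SeriesPair P₁ P₂)) :
    Multiset.card P = (P.map fst).countP (c ∈ ·.1) + (P.map snd).countP (c ∈ ·.1) +
      P.countP fun p => c ∉ p.1.1 ∧ c ∉ p.1.2 := by
  induction P using Multiset.induction with
  | empty => simp
  | cons p P ih =>
    have : c ∈ p.1.1 → c ∉ p.1.2 := fun h => Finset.disjoint_left.1 p.2.2.2 h
    simp only [Multiset.map_cons, Multiset.countP_cons, Multiset.card_cons, ih, fst, snd]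
    split_ifs <;> first | omega | tauto

theorem exists_mem_notMem_of_map_eq {P Q : Multiset (SeriesPair P₁ P₂)}
    (hfst : P.map fst = Q.map fst) (hsnd : P.map snd = Q.map snd) {q : SeriesPair P₁ P₂}
    (hq : q ∈ Q) (hqc : c ∉ q.1.1 ∧ c ∉ q.1.2) : ∃ p ∈ P, c ∉ p.1.1 ∧ c ∉ p.1.2 := by
  have hcard : Multiset.card P = Multiset.card Q := by
    simpa using congrArg Multiset.card hfst
  have hP := card_eq_countP_add_countP_add_countP (c := c) P
  have hQ := card_eq_countP_add_countP_add_countP (c := c) Q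
  have hpos : 0 < Q.countP fun p => c ∉ p.1.1 ∧ c ∉ p.1.2 :=
    Multiset.countP_pos.2 ⟨q, hq, hqc⟩
  rw [hfst, hsnd] at hP
  exact Multiset.countP_pos.1 (by omega)

theorem exists_reflTransGen_swapMove_cons
    (hc : ∀ ⦃B D⦄, P₁ B → P₂ D → ∀ a ∈ B, a ∈ D → a = c)
    {P Q : Multiset (SeriesPair P₁ P₂)} (hfst : P.map fst = Q.map fst)
    (hsnd : P.map snd = Q.map snd) {q : SeriesPair P₁ P₂} (hq : q ∈ Q) :
    ∃ P', ReflTransGen SwapMove P (q ::ₘ P') := by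
  obtain ⟨p₁, hp₁, hB₁⟩ := Multiset.mem_map.1 (hfst ▸ Multiset.mem_map_of_mem fst hq)
  obtain ⟨P₀, rfl⟩ := Multiset.exists_cons_of_mem hp₁
  by_cases hD₁ : p₁.1.2 = q.1.2
  · obtain rfl : p₁ = q := Subtype.ext (Prod.ext (congrArg Subtype.val hB₁) hD₁)
    exact ⟨P₀, .refl⟩
  obtain ⟨p₂, hp₂, hD₂⟩ : ∃ p₂ ∈ P₀, snd p₂ = snd q := by
    have := hsnd ▸ Multiset.mem_map_of_mem snd hq
    rw [Multiset.map_cons, Multiset.mem_cons] at this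
    exact Multiset.mem_map.1 (this.resolve_left fun h => hD₁ (congrArg Subtype.val h).symm)
  obtain ⟨W, rfl⟩ := Multiset.exists_cons_of_mem hp₂
  have hq₁ : p₁.1.1 = q.1.1 := congrArg Subtype.val hB₁
  have hq₂ : p₂.1.2 = q.1.2 := congrArg Subtype.val hD₂
  have hdisj : Disjoint p₁.1.1 p₂.1.2 := hq₁ ▸ hq₂ ▸ q.2.2.2
  have hmix : ∀ h, mix p₁ p₂ h = q := fun _ => Subtype.ext (Prod.ext hq₁ hq₂)
  by_cases hbad : c ∈ p₂.1.1 ∧ c ∈ p₁.1.2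
  · -- then `q` avoids `c`, so some third pair `p₃` avoids `c` and serves as an intermediary
    obtain ⟨p₃, hp₃, hc₃⟩ := exists_mem_notMem_of_map_eq hfst hsnd hq
      ⟨hq₁ ▸ fun h => Finset.disjoint_left.1 p₁.2.2.2 h hbad.2,
        hq₂ ▸ Finset.disjoint_left.1 p₂.2.2.2 hbad.1⟩
    have hp₃W : p₃ ∈ W := by
      rcases Multiset.mem_cons.1 hp₃ with rfl | hp₃
      · exact absurd hbad.2 hc₃.2
      rcases Multiset.mem_cons.1 hp₃ with rfl | hp₃
      · exact absurd hbad.1 hc₃.1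
      exact hp₃
    obtain ⟨W', rfl⟩ := Multiset.exists_cons_of_mem hp₃W
    obtain ⟨W'', hW''⟩ := exists_reflTransGen_swapMove_mix_cons hc W' hdisj hc₃
    exact ⟨W'', hmix hdisj ▸ hW''⟩
  · refine ⟨mix p₂ p₁ (disjoint_of_not_and_mem hc p₂.2.1 p₁.2.2.1 hbad) ::ₘ W, .single ?_⟩
    exact ⟨p₁, p₂, W, hdisj, _, rfl, by rw [hmix]⟩

theorem reflTransGen_quadMove_of_map_eq (hc : ∀ ⦃B D⦄, P₁ B → P₂ D → ∀ a ∈ B, a ∈ D → a = c)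
    {P Q : Multiset (SeriesPair P₁ P₂)} (hfst : P.map fst = Q.map fst)
    (hsnd : P.map snd = Q.map snd) : ReflTransGen (QuadMove val) P Q := by
  induction Q using Multiset.induction generalizing P with
  | empty =>
    rw [Multiset.map_zero, Multiset.map_eq_zero] at hfst
    exact hfst ▸ .refl
  | cons q Q ih =>
    obtain ⟨P', hP'⟩ := exists_reflTransGen_swapMove_cons hc hfst hsnd (Multiset.mem_cons_self q Q)
    have hfst' := (hP'.apply_eq _ fun _ _ h => h.map_fst).symm.trans hfst
    have hsnd' := (hP'.apply_eq _ fun _ _ h => h.map_snd).symm.trans hsnd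
    simp only [Multiset.map_cons, Multiset.cons_inj_right] at hfst' hsnd'
    exact (ReflTransGen.mono (fun _ _ h => SwapMove.quadMove h) _ _ hP').trans
      (ReflTransGen.lift (q ::ₘ ·) (fun _ _ h => QuadMove.cons q h) _ _ (ih hfst' hsnd'))

end SeriesPair

open SeriesPair in
theorem QuadConnectedFamily.series
    (hc : ∀ ⦃B D⦄, P₁ B → P₂ D → ∀ a ∈ B, a ∈ D → a = c)
    (hcard₁ : ∀ B B', P₁ B → P₁ B' → B.card = B'.card)
    (hcard₂ : ∀ D D', P₂ D → P₂ D' → D.card = D'.card)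
    (h₁ : QuadConnectedFamily P₁) (h₂ : QuadConnectedFamily P₂) :
    QuadConnectedFamily (SeriesFamily P₁ P₂) := by
  obtain ⟨r₁, hr₁, hB⟩ := exists_pos_card_eq hcard₁ fun _ => h₁.nonempty
  obtain ⟨r₂, -, hD⟩ := exists_pos_card_eq hcard₂ fun _ => h₂.nonempty
  intro x y hxy
  obtain ⟨P, rfl⟩ := Multiset.map_surjective_of_surjective union_surjective x
  obtain ⟨Q, rfl⟩ := Multiset.map_surjective_of_surjective union_surjective y
  have hT : ∀ T : {T // SeriesFamily P₁ P₂ T}, Multiset.card T.1.val = r₁ + r₂ := by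
    rintro ⟨_, B, D, hB', hD', hBD, rfl⟩
    exact (Finset.card_union_of_disjoint hBD).trans (by rw [hB B hB', hD D hD'])
  have hcard : Multiset.card P = Multiset.card Q := by
    simpa using card_eq_of_bind_eq (by omega) hT hxy
  have hfst := bind_map_fst_eq hc hB hcard hxy
  have hsnd : (P.map snd).bind (·.1.val) = (Q.map snd).bind (·.1.val) := by
    rwa [bind_map_union, bind_map_union, hfst, add_right_inj] at hxy
  obtain ⟨P', hPP', hP'fst, hP'snd⟩ := ReflTransGen.exists_lift (Multiset.map fst)
    (Multiset.map snd) (fun _ _ h => exists_quadMove_of_quadMove_map_fst hc h) (h₁ _ _ hfst)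
  obtain ⟨P'', hP'P'', hP''snd, hP''fst⟩ := ReflTransGen.exists_lift (Multiset.map snd)
    (Multiset.map fst) (fun _ _ h => exists_quadMove_of_quadMove_map_snd hc h)
    (h₂ _ _ (hP'snd ▸ hsnd))
  have hP''Q := reflTransGen_quadMove_of_map_eq hc (hP''fst.trans hP'fst) hP''snd
  exact ReflTransGen.lift (Multiset.map union) (fun _ _ h => h.map union val_union) _ _
    ((hPP'.trans hP'P'').trans hP''Q)

end Series

namespace Matroid

variable {α : Type} {M M' N : Matroid α} {c : α}

def BasesQuadConnected (M : Matroid α) : Prop :=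
  QuadConnectedFamily fun B : Finset α => M.IsBase ↑B

theorem generatedByQuadBinomials_matroidToricIdeal_iff (K : Type) [Field K] [Fintype α]
    [DecidableEq α] : GeneratedByQuadBinomials (matroidToricIdeal K M) ↔ M.BasesQuadConnected :=
  generatedByQuadBinomials_ker_monomialMap_iff

theorem IsBase.finset_card_eq {B B' : Finset α} (hB : M.IsBase ↑B) (hB' : M.IsBase ↑B') :
    B.card = B'.card := by
  simpa using hB.ncard_eq_ncard_of_isBase hB'

theorem BasesQuadConnected.of_isBase_iff (hM : M.BasesQuadConnected)
    (h : ∀ S, N.IsBase S ↔ M.IsBase S) : N.BasesQuadConnected := by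
  rwa [BasesQuadConnected, funext fun B : Finset α => propext (h ↑B)]

theorem isBase_iff_of_isContractionOf_of_isLoopElem (h : IsContractionOf M' M c)
    (hc : IsLoopElem M c) (S : Set α) : M'.IsBase S ↔ M.IsBase S := by
  obtain ⟨hE, hbase⟩ := h
  have hco : IsColoopElem M✶ c := fun B hB => by
    rw [dual_isBase_iff'] at hB
    by_contra hcB
    exact hc.2 _ hB.1 ⟨hc.1, hcB⟩
  rw [← dual_dual M', dual_isBase_iff', hbase, hE, dual_ground]
  simp only [hco, not_true_eq_false, false_and, or_false, true_and, dual_isBase_iff']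
  constructor
  · rintro ⟨⟨B, ⟨hB, hBE⟩, hSB⟩, hSE⟩
    have hcB : c ∈ B := hco B (dual_isBase_iff'.2 ⟨hB, hBE⟩)
    convert hB using 1
    ext a
    have h₁ := Set.ext_iff.1 hSB a
    have h₂ := @hSE a
    simp only [Set.mem_sdiff, Set.mem_singleton_iff] at h₁ h₂ ⊢
    by_cases hac : a = c
    · subst hac; tauto
    · have := @hBE a; tauto
  · intro hS
    have hcS : c ∉ S := hc.2 S hS
    refine ⟨⟨M.E \ S, ⟨by rwa [Set.sdiff_sdiff_cancel_left hS.subset_ground],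
      Set.sdiff_subset⟩, ?_⟩, fun a ha => ⟨hS.subset_ground ha, fun h => hcS (h ▸ ha)⟩⟩
    rw [Set.sdiff_sdiff_comm]

theorem BasesQuadConnected.of_isContractionOf (hM : M.BasesQuadConnected)
    (h : IsContractionOf M' M c) (hc : IsLoopElem M c) : M'.BasesQuadConnected :=
  hM.of_isBase_iff (isBase_iff_of_isContractionOf_of_isLoopElem h hc)

theorem BasesQuadConnected.of_isDeletionOf [DecidableEq α] (hM : M.BasesQuadConnected)
    (h : IsDeletionOf M' M c) : M'.BasesQuadConnected ∨ M'.IsBase ∅ := by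
  obtain ⟨-, hbase⟩ := h
  by_cases hco : IsColoopElem M c
  · have hD : ∀ D : Finset α, M'.IsBase ↑D ↔ c ∉ D ∧ M.IsBase ↑(insert c D) := by
      intro D
      simp only [hbase, hco, true_and, not_true_eq_false, false_and, or_false]
      constructor
      · rintro ⟨B, hB, hDB⟩
        refine ⟨fun hcD => by simpa [hDB] using Finset.mem_coe.2 hcD, ?_⟩
        rwa [Finset.coe_insert, hDB, Set.insert_sdiff_singleton, Set.insert_eq_of_mem (hco B hB)]
      · rintro ⟨hcD, hB⟩
        exact ⟨_, hB, by simp [hcD]⟩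
    by_cases h₀ : M'.IsBase ∅
    · exact .inr h₀
    refine .inl ?_
    rw [BasesQuadConnected, funext fun D => propext (hD D)]
    refine hM.of_insert (fun B hB => hco _ hB) (fun _ _ => IsBase.finset_card_eq) fun D hcD hB => ?_
    refine Finset.nonempty_iff_ne_empty.2 fun hD₀ => h₀ ?_
    simpa [hD₀] using (hD D).2 ⟨hcD, hB⟩
  · refine .inl ?_
    have hD : ∀ B : Finset α, M'.IsBase ↑B ↔ M.IsBase ↑B ∧ c ∉ B := by
      simp [hbase, hco]
    rw [BasesQuadConnected, funext fun D => propext (hD D)]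
    exact hM.restrict_notMem c

theorem BasesQuadConnected.series [DecidableEq α] {M₁ M₂ MS : Matroid α}
    (h₁ : M₁.BasesQuadConnected) (h₂ : M₂.BasesQuadConnected) (hc : M₁.E ∩ M₂.E ⊆ {c})
    (hMS : ∀ S, MS.IsBase S ↔ ∃ B D, M₁.IsBase B ∧ M₂.IsBase D ∧ Disjoint B D ∧ S = B ∪ D) :
    MS.BasesQuadConnected := by
  have hT : ∀ T : Finset α, MS.IsBase ↑T ↔
      SeriesFamily (fun B : Finset α => M₁.IsBase ↑B) (fun D => M₂.IsBase ↑D) T := by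
    intro T
    rw [hMS]
    constructor
    · rintro ⟨B, D, hB, hD, hBD, hT⟩
      lift B to Finset α using T.finite_toSet.subset (hT ▸ Set.subset_union_left)
      lift D to Finset α using T.finite_toSet.subset (hT ▸ Set.subset_union_right)
      exact ⟨B, D, hB, hD, Finset.disjoint_coe.1 hBD, by exact_mod_cast hT⟩
    · rintro ⟨B, D, hB, hD, hBD, rfl⟩
      exact ⟨B, D, hB, hD, Finset.disjoint_coe.2 hBD, Finset.coe_union B D⟩
  rw [BasesQuadConnected, funext fun T => propext (hT T)]
  exact QuadConnectedFamily.series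
    (fun B D hB hD a haB haD => hc ⟨hB.subset_ground haB, hD.subset_ground haD⟩)
    (fun _ _ => IsBase.finset_card_eq) (fun _ _ => IsBase.finset_card_eq) h₁ h₂

theorem isBase_disjointSum_iff_exists {h : Disjoint M.E N.E} {S : Set α} :
    (M.disjointSum N h).IsBase S ↔
      ∃ B D, M.IsBase B ∧ N.IsBase D ∧ Disjoint B D ∧ S = B ∪ D := by
  rw [disjointSum_isBase_iff]
  constructor
  · rintro ⟨hB, hD, hS⟩
    refine ⟨S ∩ M.E, S ∩ N.E, hB, hD, h.mono Set.inter_subset_right Set.inter_subset_right, ?_⟩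
    rw [← Set.inter_union_distrib_left, Set.inter_eq_self_of_subset_left hS]
  · rintro ⟨B, D, hB, hD, hBD, rfl⟩
    have hBN : B ∩ N.E = ∅ := (h.mono_left hB.subset_ground).inter_eq
    have hDM : D ∩ M.E = ∅ := (h.symm.mono_left hD.subset_ground).inter_eq
    refine ⟨?_, ?_, Set.union_subset_union hB.subset_ground hD.subset_ground⟩
    · rwa [Set.union_inter_distrib_right, Set.inter_eq_self_of_subset_left hB.subset_ground, hDM,
        Set.union_empty]
    · rwa [Set.union_inter_distrib_right, Set.inter_eq_self_of_subset_left hD.subset_ground, hBN,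
        Set.empty_union]

theorem BasesQuadConnected.disjointSum [DecidableEq α] [Nonempty α] (hM : M.BasesQuadConnected)
    (hN : N.BasesQuadConnected ∨ N.IsBase ∅) (h : Disjoint M.E N.E) :
    (M.disjointSum N h).BasesQuadConnected := by
  rcases hN with hN | hN
  · exact hM.series hN (c := Classical.arbitrary α) (by simp [h.inter_eq])
      fun _ => isBase_disjointSum_iff_exists
  · refine hM.of_isBase_iff fun S => ?_
    rw [isBase_disjointSum_iff_exists]
    constructor
    · rintro ⟨B, D, hB, hD, -, rfl⟩
      rwa [← hN.eq_of_subset_isBase hD (Set.empty_subset D), Set.union_empty]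
    · exact fun hS => ⟨S, ∅, hS, hN, Set.disjoint_empty S, (Set.union_empty S).symm⟩

end Matroid

/-- Quadratic generation of toric ideals of matroids is preserved by series connections. -/
theorem statement13 (K : Type) [Field K] {α : Type} [Fintype α] [DecidableEq α]
    (M₁ M₂ MS : Matroid α) (c : α) (hE : M₁.E ∩ M₂.E = {c})
    -- if `c` is neither a loop nor a coloop of `M₁` or `M₂`, the bases of the series
    -- connection are the disjoint unions of a basis of `M₁` and a basis of `M₂`
    (hmain : (¬ IsLoopElem M₁ c ∧ ¬ IsColoopElem M₁ c ∧
        ¬ IsLoopElem M₂ c ∧ ¬ IsColoopElem M₂ c) →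
      (MS.E = M₁.E ∪ M₂.E ∧ ∀ S : Set α, MS.IsBase S ↔
        ∃ B D, M₁.IsBase B ∧ M₂.IsBase D ∧ Disjoint B D ∧ S = B ∪ D))
    -- if `c` is a loop of `M₁`, then `S(M₁, M₂) = (M₁ / c) ⊕ M₂`
    (hloop1 : IsLoopElem M₁ c → ∃ (M₁' : Matroid α) (h : Disjoint M₁'.E M₂.E),
      IsContractionOf M₁' M₁ c ∧ MS = M₁'.disjointSum M₂ h)
    -- if `c` is a coloop of `M₁`, then `S(M₁, M₂) = M₁ ⊕ (M₂ ∖ c)`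
    (hcoloop1 : IsColoopElem M₁ c → ∃ (M₂' : Matroid α) (h : Disjoint M₁.E M₂'.E),
      IsDeletionOf M₂' M₂ c ∧ MS = M₁.disjointSum M₂' h)
    -- symmetrically, if `c` is a loop of `M₂`, then `S(M₁, M₂) = M₁ ⊕ (M₂ / c)`
    (hloop2 : IsLoopElem M₂ c → ∃ (M₂' : Matroid α) (h : Disjoint M₁.E M₂'.E),
      IsContractionOf M₂' M₂ c ∧ MS = M₁.disjointSum M₂' h)
    -- and if `c` is a coloop of `M₂`, then `S(M₁, M₂) = (M₁ ∖ c) ⊕ M₂`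
    (hcoloop2 : IsColoopElem M₂ c → ∃ (M₁' : Matroid α) (h : Disjoint M₁'.E M₂.E),
      IsDeletionOf M₁' M₁ c ∧ MS = M₁'.disjointSum M₂ h)
    (h₁ : GeneratedByQuadBinomials (matroidToricIdeal K M₁))
    (h₂ : GeneratedByQuadBinomials (matroidToricIdeal K M₂)) :
    GeneratedByQuadBinomials (matroidToricIdeal K MS) := by
  rw [Matroid.generatedByQuadBinomials_matroidToricIdeal_iff] at h₁ h₂ ⊢
  have : Nonempty α := ⟨c⟩
  by_cases hl₁ : IsLoopElem M₁ c
  · obtain ⟨M₁', h, hcon, rfl⟩ := hloop1 hl₁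
    exact (h₁.of_isContractionOf hcon hl₁).disjointSum (.inl h₂) h
  by_cases hl₂ : IsLoopElem M₂ c
  · obtain ⟨M₂', h, hcon, rfl⟩ := hloop2 hl₂
    exact h₁.disjointSum (.inl (h₂.of_isContractionOf hcon hl₂)) h
  by_cases hco₁ : IsColoopElem M₁ c
  · obtain ⟨M₂', h, hdel, rfl⟩ := hcoloop1 hco₁
    exact h₁.disjointSum (h₂.of_isDeletionOf hdel) h
  by_cases hco₂ : IsColoopElem M₂ c
  · obtain ⟨M₁', h, hdel, rfl⟩ := hcoloop2 hco₂
    rw [Matroid.disjointSum_comm]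
    exact h₂.disjointSum (h₁.of_isDeletionOf hdel) h.symm
  exact h₁.series h₂ hE.subset (hmain ⟨hl₁, hco₁, hl₂, hco₂⟩).2
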